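/- arXiv:2507.05004 — 6 statements merged into one kernel-verified Lean document; each statement's English description precedes it below -/
import Mathlib

section
/- Let C > 0, D ≥ 0, T > 0, let h : ℝ → ℝ be continuous and nonnegative, and let u : ℝ → ℝ be differentiable and nonnegative with u(0) = 0 and |u'(t)| ≤ C·∫₀ᵗ h(τ) dτ + (D/2)·u(t) for all t ∈ [0,T]. Then u(t) ≤ C e^{DT/2} ∫₀ᵗ (t − τ) h(τ) dτ for all t ∈ [0,T]. -/
/-!
By Grönwall's argument, multiplying by the integrating factor `e^{-Dt/2}` gives
`(e^{-Dt/2} u)' ≤ C ∫₀ᵗ h`, hence `u(t) ≤ C e^{Dt/2} ∫₀ᵗ ∫₀ˢ h`; the double integral equals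
`∫₀ᵗ (t - τ) h(τ) dτ` by Cauchy's formula for repeated integration.
-/

open Real Set intervalIntegral

theorem integral_sub_mul_eq_integral_integral {h : ℝ → ℝ} (hh : Continuous h) (a t : ℝ) :
    ∫ τ in a..t, (t - τ) * h τ = ∫ s in a..t, ∫ τ in a..s, h τ := by
  have hG : ∀ s, HasDerivAt (fun s => ∫ τ in a..s, h τ) (h s) s := fun s =>
    (hh.integral_hasStrictDerivAt a s).hasDerivAt
  have hshift : ∀ s, HasDerivAt (fun s => t - s) (-1) s := fun s =>
    (hasDerivAt_id s).const_sub t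
  rw [integral_mul_deriv_eq_deriv_mul (fun s _ => hshift s) (fun s _ => hG s)
    intervalIntegrable_const (hh.intervalIntegrable a t)]
  simp

theorem le_exp_mul_add_integral_of_deriv_le {u f : ℝ → ℝ} {K t : ℝ} (hK : 0 ≤ K)
    (ht : 0 ≤ t) (hu : Differentiable ℝ u) (hf : Continuous f)
    (hf0 : ∀ s ∈ Icc 0 t, 0 ≤ f s) (hderiv : ∀ s ∈ Icc 0 t, deriv u s ≤ f s + K * u s) :
    u t ≤ exp (K * t) * (u 0 + ∫ s in 0..t, f s) := by
  set w : ℝ → ℝ := fun s => exp (-(K * s)) * u s - ∫ r in 0..s, f r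
  have hw : ∀ s, HasDerivAt w (exp (-(K * s)) * (deriv u s - K * u s) - f s) s := by
    intro s
    have hexp : HasDerivAt (fun s => exp (-(K * s))) (exp (-(K * s)) * -K) s := by
      simpa using ((hasDerivAt_id s).const_mul K).neg.exp
    have hF : HasDerivAt (fun s => ∫ r in 0..s, f r) (f s) s :=
      (hf.integral_hasStrictDerivAt 0 s).hasDerivAt
    exact ((hexp.mul (hu s).hasDerivAt).sub hF).congr_deriv (by ring)
  have hw_anti : AntitoneOn w (Icc 0 t) := by
    refine antitoneOn_of_hasDerivWithinAt_nonpos (convex_Icc 0 t)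
      (fun s _ => (hw s).continuousAt.continuousWithinAt)
      (fun s _ => (hw s).hasDerivWithinAt) fun s hs => ?_
    rw [interior_Icc] at hs
    have hs' : s ∈ Icc 0 t := Ioo_subset_Icc_self hs
    have hexp_le : exp (-(K * s)) ≤ 1 := exp_le_one_iff.2 (by nlinarith [hs.1])
    calc exp (-(K * s)) * (deriv u s - K * u s) - f s
        ≤ exp (-(K * s)) * f s - f s := by
          gcongr
          linarith [hderiv s hs']
      _ ≤ 1 * f s - f s := by gcongr; exact hf0 s hs'
      _ = 0 := by ring
  have hwt : w t ≤ w 0 := hw_anti (left_mem_Icc.2 ht) (right_mem_Icc.2 ht) ht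
  have hu_eq : u t = exp (K * t) * (exp (-(K * t)) * u t) := by
    rw [← mul_assoc, ← exp_add, add_neg_cancel, exp_zero, one_mul]
  rw [hu_eq]
  gcongr
  simpa [w] using hwt

theorem retarded_iteration_step_general (C D T : ℝ) (hC : 0 < C) (hD : 0 ≤ D)
    (h u : ℝ → ℝ) (hh : Continuous h) (hh0 : ∀ t, 0 ≤ h t)
    (hu : Differentiable ℝ u) (hu00 : u 0 = 0)
    (hub : ∀ t ∈ Set.Icc (0 : ℝ) T,
      |deriv u t| ≤ C * (∫ τ in (0 : ℝ)..t, h τ) + (D / 2) * u t) :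
    ∀ t ∈ Set.Icc (0 : ℝ) T,
      u t ≤ C * Real.exp (D * T / 2) * ∫ τ in (0 : ℝ)..t, (t - τ) * h τ := by
  intro t ht
  have hsub : Icc 0 t ⊆ Icc 0 T := Icc_subset_Icc_right ht.2
  have hprimitive_nonneg : ∀ s, 0 ≤ s → 0 ≤ ∫ τ in (0 : ℝ)..s, h τ := fun s hs =>
    integral_nonneg hs fun τ _ => hh0 τ
  have hgronwall := le_exp_mul_add_integral_of_deriv_le (u := u)
    (f := fun s => C * ∫ τ in (0 : ℝ)..s, h τ) (K := D / 2) (by positivity) ht.1 hu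
    (continuous_const.mul (continuous_primitive (hh.intervalIntegrable · ·) 0))
    (fun s hs => mul_nonneg hC.le (hprimitive_nonneg s hs.1))
    (fun s hs => (le_abs_self _).trans (hub s (hsub hs)))
  rw [hu00, zero_add, integral_const_mul, ← integral_sub_mul_eq_integral_integral hh] at hgronwall
  have hkernel_nonneg : 0 ≤ ∫ τ in (0 : ℝ)..t, (t - τ) * h τ :=
    integral_nonneg ht.1 fun τ hτ => mul_nonneg (by linarith [hτ.2]) (hh0 τ)
  calc u t ≤ exp (D / 2 * t) * (C * ∫ τ in (0 : ℝ)..t, (t - τ) * h τ) := hgronwall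
    _ ≤ exp (D * T / 2) * (C * ∫ τ in (0 : ℝ)..t, (t - τ) * h τ) := by
        gcongr
        nlinarith [ht.2]
    _ = C * exp (D * T / 2) * ∫ τ in (0 : ℝ)..t, (t - τ) * h τ := by ring

/-- One iteration step of the Picard-type scheme for a symmetric hyperbolic system with a
retarded nonlocal potential: from `u(0) = 0` and
`|u'(t)| ≤ C ∫₀ᵗ h + (D/2) u(t)` on `[0,T]` one obtains
`u(t) ≤ C e^{DT/2} ∫₀ᵗ (t-τ) h(τ) dτ`. -/
theorem retarded_iteration_step (C D T : ℝ) (hC : 0 < C) (hD : 0 ≤ D) (hT : 0 < T)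
    (h u : ℝ → ℝ) (hh : Continuous h) (hh0 : ∀ t, 0 ≤ h t)
    (hu : Differentiable ℝ u) (hu0 : ∀ t, 0 ≤ u t) (hu00 : u 0 = 0)
    (hub : ∀ t ∈ Set.Icc (0 : ℝ) T,
      |deriv u t| ≤ C * (∫ τ in (0 : ℝ)..t, h τ) + (D / 2) * u t) :
    ∀ t ∈ Set.Icc (0 : ℝ) T,
      u t ≤ C * Real.exp (D * T / 2) * ∫ τ in (0 : ℝ)..t, (t - τ) * h τ :=
  retarded_iteration_step_general C D T hC hD h u hh hh0 hu hu00 hub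
end

section
/- Let C > 0, D ≥ 0, δ > 0, let h : ℝ → ℝ be continuous and nonnegative, and let u : ℝ → ℝ be differentiable and nonnegative with u(0) = 0 and |u'(t)| ≤ C·∫_{t−δ}^{t+δ} e^{−D|s|/2} h(s) ds + (D/2)·u(t) for all t ∈ ℝ. Then for every t ≥ 0 one has u(t) ≤ 2δC·e^{Dt/2}·∫_{−δ}^{t+δ} e^{−D|s|/2} h(s) ds, and for every t ≤ 0 one has u(t) ≤ 2δC·e^{−Dt/2}·∫_{t−δ}^{δ} e^{−D|s|/2} h(s) ds. -/
/-!
Multiplying by the integrating factor `e^{-Dt/2}` (which is `≤ 1` for `t ≥ 0`) reduces the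
differential inequality to `u t ≤ C e^{Dt/2} ∫_0^t ∫_{τ-δ}^{τ+δ} g`, where
`g s = e^{-D|s|/2} h s`. Writing the inner integral with a primitive `Φ` of `g` and shifting,
the double integral becomes `∫_{-δ}^{δ} (Φ (x + t) - Φ x) dx`, and each integrand is an integral
of `g ≥ 0` over a subinterval of `[-δ, t + δ]`; this gives the factor `2δ`. The case `t ≤ 0`
follows by time reversal `t ↦ -t`.
-/

open intervalIntegral MeasureTheory Real

theorem continuous_integral_window {g : ℝ → ℝ} (hg : ∀ a b, IntervalIntegrable g volume a b)
    (δ : ℝ) : Continuous fun τ => ∫ s in (τ - δ)..(τ + δ), g s := by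
  have hΦ := continuous_primitive hg 0
  have h : (fun τ => ∫ s in (τ - δ)..(τ + δ), g s) =
      fun τ => (∫ s in (0 : ℝ)..(τ + δ), g s) - ∫ s in (0 : ℝ)..(τ - δ), g s :=
    funext fun τ => (integral_interval_sub_left (hg 0 _) (hg 0 _)).symm
  rw [h]
  fun_prop

/-- Both sides equal `∫ x in t-δ..t+δ, Φ x - ∫ x in -δ..δ, Φ x`. -/
theorem integral_shift_sub_shift_comm {Φ : ℝ → ℝ} (hΦ : Continuous Φ) (δ t : ℝ) :
    ∫ τ in (0 : ℝ)..t, (Φ (τ + δ) - Φ (τ - δ)) = ∫ x in (-δ)..δ, (Φ (x + t) - Φ x) := by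
  have hi : ∀ a b : ℝ, IntervalIntegrable Φ volume a b := hΦ.intervalIntegrable
  rw [integral_sub (f := fun τ => Φ (τ + δ)) (g := fun τ => Φ (τ - δ))
      ((hΦ.comp (continuous_add_const δ)).intervalIntegrable _ _)
      ((hΦ.comp (continuous_sub_right δ)).intervalIntegrable _ _),
    integral_sub (f := fun x => Φ (x + t))
      ((hΦ.comp (continuous_add_const t)).intervalIntegrable _ _) (hi _ _),
    integral_comp_add_right, integral_comp_sub_right, integral_comp_add_right, zero_add, zero_sub,
    integral_interval_sub_interval_comm' (hi _ _) (hi _ _) (hi _ _), neg_add_eq_sub, add_comm δ t]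

theorem integral_integral_window_le {g : ℝ → ℝ} (hg : ∀ a b, IntervalIntegrable g volume a b)
    (hg0 : ∀ s, 0 ≤ g s) {δ t : ℝ} (hδ : 0 ≤ δ) (ht : 0 ≤ t) :
    ∫ τ in (0 : ℝ)..t, (∫ s in (τ - δ)..(τ + δ), g s) ≤ 2 * δ * ∫ s in (-δ)..(t + δ), g s := by
  set Φ : ℝ → ℝ := fun x => ∫ s in (0 : ℝ)..x, g s
  have hΦ : Continuous Φ := continuous_primitive hg 0
  have hdiff : ∀ a b, ∫ s in a..b, g s = Φ b - Φ a := fun a b =>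
    (integral_interval_sub_left (hg 0 b) (hg 0 a)).symm
  have hbound : ∀ x ∈ Set.Icc (-δ) δ, Φ (x + t) - Φ x ≤ ∫ s in (-δ)..(t + δ), g s := by
    intro x hx
    rw [← hdiff]
    exact integral_mono_interval (by linarith [hx.1]) (by linarith) (by linarith [hx.2])
      (Filter.Eventually.of_forall hg0) (hg _ _)
  calc ∫ τ in (0 : ℝ)..t, (∫ s in (τ - δ)..(τ + δ), g s)
      = ∫ x in (-δ)..δ, (Φ (x + t) - Φ x) := by
        simp only [hdiff]; exact integral_shift_sub_shift_comm hΦ δ t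
    _ ≤ ∫ _ in (-δ)..δ, ∫ s in (-δ)..(t + δ), g s :=
        integral_mono_on (by linarith)
          (((hΦ.comp (continuous_add_const t)).sub hΦ).intervalIntegrable _ _)
          intervalIntegrable_const hbound
    _ = 2 * δ * ∫ s in (-δ)..(t + δ), g s := by
        rw [intervalIntegral.integral_const, smul_eq_mul]; ring

theorem le_exp_mul_integral_of_deriv_le {k : ℝ} (hk : 0 ≤ k) {u f : ℝ → ℝ} (hf : Continuous f)
    (hf0 : ∀ x, 0 ≤ x → 0 ≤ f x) (hu : Differentiable ℝ u) (hu0 : u 0 = 0)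
    (hub : ∀ x, 0 ≤ x → deriv u x ≤ f x + k * u x) {t : ℝ} (ht : 0 ≤ t) :
    u t ≤ exp (k * t) * ∫ x in (0 : ℝ)..t, f x := by
  set P : ℝ → ℝ := fun x => exp (-k * x) * u x - ∫ y in (0 : ℝ)..x, f y
  have hP : ∀ x, HasDerivAt P (exp (-k * x) * (deriv u x - k * u x) - f x) x := by
    intro x
    have hexp : HasDerivAt (fun y => exp (-k * y)) (exp (-k * x) * -k) x := by
      simpa using ((hasDerivAt_id x).const_mul (-k)).exp
    exact ((hexp.mul (hu x).hasDerivAt).sub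
      (hf.integral_hasStrictDerivAt 0 x).hasDerivAt).congr_deriv (by ring)
  have hP_nonpos : ∀ x, 0 ≤ x → exp (-k * x) * (deriv u x - k * u x) - f x ≤ 0 := by
    intro x hx
    have hexp_le_one : exp (-k * x) ≤ 1 := exp_le_one_iff.2 (by nlinarith)
    have := mul_le_mul_of_nonneg_left (sub_le_iff_le_add'.2 (hub x hx)) (exp_pos (-k * x)).le
    nlinarith [hf0 x hx]
  have hanti : AntitoneOn P (Set.Ici 0) :=
    antitoneOn_of_hasDerivWithinAt_nonpos (convex_Ici 0)
      (fun x _ => (hP x).continuousAt.continuousWithinAt)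
      (fun x _ => (hP x).hasDerivWithinAt)
      (fun x hx => hP_nonpos x (interior_subset hx))
  have hPt : P t ≤ 0 := by
    simpa [P, hu0] using hanti Set.self_mem_Ici ht ht
  calc u t = exp (k * t) * (exp (-k * t) * u t) := by
        rw [← mul_assoc, ← exp_add, neg_mul, add_neg_cancel, exp_zero, one_mul]
    _ ≤ exp (k * t) * ∫ x in (0 : ℝ)..t, f x :=
        mul_le_mul_of_nonneg_left (sub_nonpos.1 hPt) (exp_pos _).le

theorem le_of_deriv_le_integral_window {C D δ : ℝ} (hC : 0 ≤ C) (hD : 0 ≤ D) (hδ : 0 ≤ δ)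
    {g u : ℝ → ℝ} (hg : ∀ a b, IntervalIntegrable g volume a b) (hg0 : ∀ s, 0 ≤ g s)
    (hu : Differentiable ℝ u) (hu0 : u 0 = 0)
    (hub : ∀ t, 0 ≤ t → deriv u t ≤ C * (∫ s in (t - δ)..(t + δ), g s) + D / 2 * u t)
    {t : ℝ} (ht : 0 ≤ t) :
    u t ≤ 2 * δ * C * exp (D * t / 2) * ∫ s in (-δ)..(t + δ), g s := by
  have hwin0 : ∀ τ, 0 ≤ ∫ s in (τ - δ)..(τ + δ), g s := fun τ =>
    integral_nonneg (by linarith) fun s _ => hg0 s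
  calc u t ≤ exp (D / 2 * t) * ∫ τ in (0 : ℝ)..t, C * ∫ s in (τ - δ)..(τ + δ), g s :=
        le_exp_mul_integral_of_deriv_le (by linarith)
          ((continuous_integral_window hg δ).const_mul C) (fun τ _ => mul_nonneg hC (hwin0 τ))
          hu hu0 hub ht
    _ = C * exp (D * t / 2) * ∫ τ in (0 : ℝ)..t, ∫ s in (τ - δ)..(τ + δ), g s := by
        rw [intervalIntegral.integral_const_mul, show D / 2 * t = D * t / 2 by ring]; ring
    _ ≤ C * exp (D * t / 2) * (2 * δ * ∫ s in (-δ)..(t + δ), g s) :=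
        mul_le_mul_of_nonneg_left (integral_integral_window_le hg hg0 hδ ht) (by positivity)
    _ = 2 * δ * C * exp (D * t / 2) * ∫ s in (-δ)..(t + δ), g s := by ring

theorem short_range_iteration_step_general (C D δ : ℝ) (hC : 0 < C) (hD : 0 ≤ D) (hδ : 0 < δ)
    (h u : ℝ → ℝ) (hh : Continuous h) (hh0 : ∀ t, 0 ≤ h t)
    (hu : Differentiable ℝ u) (hu00 : u 0 = 0)
    (hub : ∀ t : ℝ,
      |deriv u t| ≤ C * (∫ s in (t - δ)..(t + δ), Real.exp (-D * |s| / 2) * h s)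
        + (D / 2) * u t) :
    (∀ t : ℝ, 0 ≤ t →
      u t ≤ 2 * δ * C * Real.exp (D * t / 2) *
        ∫ s in (-δ)..(t + δ), Real.exp (-D * |s| / 2) * h s) ∧
    (∀ t : ℝ, t ≤ 0 →
      u t ≤ 2 * δ * C * Real.exp (-D * t / 2) *
        ∫ s in (t - δ)..δ, Real.exp (-D * |s| / 2) * h s) := by
  set g : ℝ → ℝ := fun s => exp (-D * |s| / 2) * h s
  have hg : Continuous g := by fun_prop
  have hg0 : ∀ s, 0 ≤ g s := fun s => mul_nonneg (exp_pos _).le (hh0 s)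
  refine ⟨fun t ht => le_of_deriv_le_integral_window hC.le hD hδ.le hg.intervalIntegrable hg0
    hu hu00 (fun t _ => (le_abs_self _).trans (hub t)) ht, fun t ht => ?_⟩
  have hreflect : ∀ a b : ℝ, ∫ s in a..b, g (-s) = ∫ s in (-b)..(-a), g s := fun a b =>
    integral_comp_neg g
  have key := le_of_deriv_le_integral_window (g := fun s => g (-s)) (u := fun x => u (-x))
    hC.le hD hδ.le (hg.comp continuous_neg).intervalIntegrable (fun s => hg0 (-s))
    (hu.comp differentiable_neg) (by simpa using hu00)
    (fun τ _ => by
      rw [deriv_comp_neg, hreflect, neg_add', neg_sub', sub_neg_eq_add]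
      exact (neg_le_abs _).trans (hub (-τ)))
    (neg_nonneg.2 ht)
  rwa [hreflect, neg_neg, neg_add', neg_neg, neg_neg, mul_neg, ← neg_mul] at key

/-- One iteration step in the short-time-range case: from `u(0) = 0` and
`|u'(t)| ≤ C ∫_{t-δ}^{t+δ} e^{-D|s|/2} h(s) ds + (D/2) u(t)` one obtains the two-sided
bound with the enlarged integration domain. -/
theorem short_range_iteration_step (C D δ : ℝ) (hC : 0 < C) (hD : 0 ≤ D) (hδ : 0 < δ)
    (h u : ℝ → ℝ) (hh : Continuous h) (hh0 : ∀ t, 0 ≤ h t)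
    (hu : Differentiable ℝ u) (hu0 : ∀ t, 0 ≤ u t) (hu00 : u 0 = 0)
    (hub : ∀ t : ℝ,
      |deriv u t| ≤ C * (∫ s in (t - δ)..(t + δ), Real.exp (-D * |s| / 2) * h s)
        + (D / 2) * u t) :
    (∀ t : ℝ, 0 ≤ t →
      u t ≤ 2 * δ * C * Real.exp (D * t / 2) *
        ∫ s in (-δ)..(t + δ), Real.exp (-D * |s| / 2) * h s) ∧
    (∀ t : ℝ, t ≤ 0 →
      u t ≤ 2 * δ * C * Real.exp (-D * t / 2) *
        ∫ s in (t - δ)..δ, Real.exp (-D * |s| / 2) * h s) :=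
  short_range_iteration_step_general C D δ hC hD hδ h u hh hh0 hu hu00 hub
end

section
/- Let C > 0, D ≥ 0, δ > 0, M ≥ 0, and let (fₙ)_{n∈ℕ} be a sequence of continuous nonnegative functions on ℝ such that f₀(t) ≤ M·e^{D|t|/2} for all t ∈ ℝ, and such that for every n ∈ ℕ: f_{n+1}(t) ≤ 2δC·e^{Dt/2}·∫_{−δ}^{t+δ} e^{−D|s|/2} fₙ(s) ds for all t ≥ 0, and f_{n+1}(t) ≤ 2δC·e^{−Dt/2}·∫_{t−δ}^{δ} e^{−D|s|/2} fₙ(s) ds for all t ≤ 0. Then fₙ(t) ≤ (M/n!)·(4Cδ)ⁿ·e^{D|t|/2}·(|t| + 2nδ)ⁿ for all n ∈ ℕ and t ∈ ℝ. -/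
open intervalIntegral

lemma srie_int_pow_le (a c : ℝ) (n : ℕ) (hc : 0 ≤ c) (ha : 0 ≤ a) :
    ∫ s in (0:ℝ)..c, (s + a) ^ n ≤ (c + a) ^ (n + 1) / ((n : ℝ) + 1) := by
  have h1 : ∫ s in (0:ℝ)..c, (s + a) ^ n = ∫ s in (0+a)..(c + a), s ^ n :=
    (intervalIntegral.integral_comp_add_right (fun s => s ^ n) a)
  have hn : (0:ℝ) < (n : ℝ) + 1 := by positivity
  rw [h1, integral_pow]
  have h2 : (c + a) ^ (n + 1) - (0 + a) ^ (n + 1) ≤ (c + a) ^ (n + 1) := by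
    have := pow_nonneg (by linarith : (0:ℝ) ≤ 0 + a) (n + 1)
    linarith
  push_cast
  exact div_le_div_of_nonneg_right h2 hn.le |>.trans_eq rfl

lemma srie_abs_int_bound (a b c : ℝ) (n : ℕ) (ha : 0 ≤ a) (hb : b ≤ 0) (hc : 0 ≤ c) :
    ∫ s in b..c, (|s| + a) ^ n ≤ ((-b + a) ^ (n + 1) + (c + a) ^ (n + 1)) / ((n : ℝ) + 1) := by
  have hcontg : Continuous fun s : ℝ => (|s| + a) ^ n :=
    (continuous_abs.add continuous_const).pow n
  have hsplit : ∫ s in b..c, (|s| + a) ^ n =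
      (∫ s in b..(0:ℝ), (|s| + a) ^ n) + ∫ s in (0:ℝ)..c, (|s| + a) ^ n :=
    (intervalIntegral.integral_add_adjacent_intervals
      (hcontg.intervalIntegrable _ _) (hcontg.intervalIntegrable _ _)).symm
  have h2 : ∫ s in (0:ℝ)..c, (|s| + a) ^ n = ∫ s in (0:ℝ)..c, (s + a) ^ n := by
    apply intervalIntegral.integral_congr
    intro s hs
    rw [Set.uIcc_of_le hc] at hs
    simp [abs_of_nonneg hs.1]
  have h3 : ∫ s in b..(0:ℝ), (|s| + a) ^ n = ∫ s in (0:ℝ)..(-b), (s + a) ^ n := by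
    have h4 : ∫ s in b..(0:ℝ), (|s| + a) ^ n = ∫ s in b..(0:ℝ), (-s + a) ^ n := by
      apply intervalIntegral.integral_congr
      intro s hs
      rw [Set.uIcc_of_le hb] at hs
      simp [abs_of_nonpos hs.2]
    rw [h4]
    simpa using intervalIntegral.integral_comp_neg (a := b) (b := (0:ℝ))
      (fun s => (s + a) ^ n)
  rw [hsplit, h2, h3, add_div]
  exact add_le_add (srie_int_pow_le a (-b) n (by linarith) ha)
    (srie_int_pow_le a c n hc ha)

/-- Key inductive estimate in the short-time-range case:
`fₙ(t) ≤ (M/n!) (4Cδ)ⁿ e^{D|t|/2} (|t| + 2nδ)ⁿ`. -/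
theorem short_range_inductive_estimate (C D δ M : ℝ)
    (hC : 0 < C) (hD : 0 ≤ D) (hδ : 0 < δ) (hM : 0 ≤ M)
    (f : ℕ → ℝ → ℝ)
    (hcont : ∀ n, Continuous (f n))
    (hpos : ∀ n t, 0 ≤ f n t)
    (h0 : ∀ t : ℝ, f 0 t ≤ M * Real.exp (D * |t| / 2))
    (hrec_pos : ∀ n, ∀ t : ℝ, 0 ≤ t →
      f (n + 1) t ≤ 2 * δ * C * Real.exp (D * t / 2) *
        ∫ s in (-δ)..(t + δ), Real.exp (-D * |s| / 2) * f n s)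
    (hrec_neg : ∀ n, ∀ t : ℝ, t ≤ 0 →
      f (n + 1) t ≤ 2 * δ * C * Real.exp (-D * t / 2) *
        ∫ s in (t - δ)..δ, Real.exp (-D * |s| / 2) * f n s) :
    ∀ n, ∀ t : ℝ,
      f n t ≤ (M / (n.factorial : ℝ)) * (4 * C * δ) ^ n *
        Real.exp (D * |t| / 2) * (|t| + 2 * (n : ℝ) * δ) ^ n := by
  intro n
  induction n with
  | zero => intro t; simpa using h0 t
  | succ n ih =>
    intro t
    set K : ℝ := M / (n.factorial : ℝ) * (4 * C * δ) ^ n with hKdef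
    have hK : 0 ≤ K := by positivity
    set a : ℝ := 2 * (n : ℝ) * δ with hadef
    have ha : 0 ≤ a := by positivity
    have hptw : ∀ s : ℝ, Real.exp (-D * |s| / 2) * f n s ≤ K * (|s| + a) ^ n := by
      intro s
      have h1 := ih s
      calc Real.exp (-D * |s| / 2) * f n s
          ≤ Real.exp (-D * |s| / 2) * (K * Real.exp (D * |s| / 2) * (|s| + a) ^ n) :=
            mul_le_mul_of_nonneg_left h1 (Real.exp_nonneg _)
        _ = (Real.exp (-D * |s| / 2) * Real.exp (D * |s| / 2)) * (K * (|s| + a) ^ n) := by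
            ring
        _ = K * (|s| + a) ^ n := by
            have hz : -D * |s| / 2 + D * |s| / 2 = 0 := by ring
            rw [← Real.exp_add, hz, Real.exp_zero, one_mul]
    have hcontg : Continuous fun s : ℝ => K * (|s| + a) ^ n :=
      continuous_const.mul ((continuous_abs.add continuous_const).pow n)
    have hcontf : Continuous fun s : ℝ => Real.exp (-D * |s| / 2) * f n s := by
      apply Continuous.mul ?_ (hcont n)
      exact Real.continuous_exp.comp (by continuity)
    have hmain : ∀ b c : ℝ, b ≤ 0 → 0 ≤ c → b ≤ c →
        (∫ s in b..c, Real.exp (-D * |s| / 2) * f n s) ≤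
          K * (((-b + a) ^ (n + 1) + (c + a) ^ (n + 1)) / ((n : ℝ) + 1)) := by
      intro b c hb hc hbc
      calc (∫ s in b..c, Real.exp (-D * |s| / 2) * f n s)
          ≤ ∫ s in b..c, K * (|s| + a) ^ n := by
            apply intervalIntegral.integral_mono_on hbc
              (hcontf.intervalIntegrable _ _) (hcontg.intervalIntegrable _ _)
            intro s _
            exact hptw s
        _ = K * ∫ s in b..c, (|s| + a) ^ n := by
            rw [intervalIntegral.integral_const_mul]
        _ ≤ K * (((-b + a) ^ (n + 1) + (c + a) ^ (n + 1)) / ((n : ℝ) + 1)) :=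
            mul_le_mul_of_nonneg_left (srie_abs_int_bound a b c n ha hb hc) hK
    have hfin :
        2 * δ * C * Real.exp (D * |t| / 2) *
          (K * (((|t| + δ + a) ^ (n + 1) + (δ + a) ^ (n + 1)) / ((n : ℝ) + 1))) ≤
        M / ((n + 1).factorial : ℝ) * (4 * C * δ) ^ (n + 1) *
          Real.exp (D * |t| / 2) * (|t| + 2 * ((n : ℕ) + 1 : ℕ) * δ) ^ (n + 1) := by
      set X : ℝ := |t| + 2 * ((n : ℝ) + 1) * δ with hXdef
      have habt : 0 ≤ |t| := abs_nonneg t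
      have hX1 : |t| + δ + a ≤ X := by
        rw [hXdef, hadef]; nlinarith
      have hX2 : δ + a ≤ X := by
        rw [hXdef, hadef]; nlinarith
      have hsum : (|t| + δ + a) ^ (n + 1) + (δ + a) ^ (n + 1) ≤ 2 * X ^ (n + 1) := by
        have b1 := pow_le_pow_left₀ (by positivity) hX1 (n + 1)
        have b2 := pow_le_pow_left₀ (by positivity) hX2 (n + 1)
        linarith
      have hXcast : (|t| + 2 * ((n : ℕ) + 1 : ℕ) * δ) = X := by
        rw [hXdef]; push_cast; ring
      rw [hXcast]
      have hfaccast : ((n + 1).factorial : ℝ) = ((n : ℝ) + 1) * (n.factorial : ℝ) := by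
        rw [Nat.factorial_succ]; push_cast; ring
      have hne : (n.factorial : ℝ) ≠ 0 := by positivity
      have hne1 : (n : ℝ) + 1 ≠ 0 := by positivity
      calc 2 * δ * C * Real.exp (D * |t| / 2) *
            (K * (((|t| + δ + a) ^ (n + 1) + (δ + a) ^ (n + 1)) / ((n : ℝ) + 1)))
          ≤ 2 * δ * C * Real.exp (D * |t| / 2) *
            (K * (2 * X ^ (n + 1) / ((n : ℝ) + 1))) := by
            apply mul_le_mul_of_nonneg_left _ (by positivity)
            apply mul_le_mul_of_nonneg_left _ hK
            exact div_le_div_of_nonneg_right hsum (by positivity : (0:ℝ) < (n:ℝ)+1).le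
        _ = M / ((n + 1).factorial : ℝ) * (4 * C * δ) ^ (n + 1) *
            Real.exp (D * |t| / 2) * X ^ (n + 1) := by
            rw [hKdef, hfaccast]
            field_simp
            ring
    rcases le_total 0 t with ht | ht
    · have habs : |t| = t := abs_of_nonneg ht
      have h1 := hrec_pos n t ht
      have h2 := hmain (-δ) (t + δ) (by linarith) (by linarith) (by linarith)
      have h2' : (∫ s in (-δ)..(t + δ), Real.exp (-D * |s| / 2) * f n s) ≤
          K * (((|t| + δ + a) ^ (n + 1) + (δ + a) ^ (n + 1)) / ((n : ℝ) + 1)) := by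
        rw [habs]
        calc _ ≤ K * (((-(-δ) + a) ^ (n + 1) + ((t + δ) + a) ^ (n + 1)) / ((n : ℝ) + 1)) := h2
          _ = K * (((t + δ + a) ^ (n + 1) + (δ + a) ^ (n + 1)) / ((n : ℝ) + 1)) := by ring
      calc f (n + 1) t
          ≤ 2 * δ * C * Real.exp (D * t / 2) *
            ∫ s in (-δ)..(t + δ), Real.exp (-D * |s| / 2) * f n s := h1
        _ ≤ 2 * δ * C * Real.exp (D * t / 2) *
            (K * (((|t| + δ + a) ^ (n + 1) + (δ + a) ^ (n + 1)) / ((n : ℝ) + 1))) :=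
            mul_le_mul_of_nonneg_left h2' (by positivity)
        _ = 2 * δ * C * Real.exp (D * |t| / 2) *
            (K * (((|t| + δ + a) ^ (n + 1) + (δ + a) ^ (n + 1)) / ((n : ℝ) + 1))) := by
            rw [habs]
        _ ≤ _ := hfin
    · have habs : |t| = -t := abs_of_nonpos ht
      have h1 := hrec_neg n t ht
      have h2 := hmain (t - δ) δ (by linarith) (by linarith) (by linarith)
      have h2' : (∫ s in (t - δ)..δ, Real.exp (-D * |s| / 2) * f n s) ≤
          K * (((|t| + δ + a) ^ (n + 1) + (δ + a) ^ (n + 1)) / ((n : ℝ) + 1)) := by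
        rw [habs]
        calc _ ≤ K * (((-(t - δ) + a) ^ (n + 1) + (δ + a) ^ (n + 1)) / ((n : ℝ) + 1)) := h2
          _ = K * (((-t + δ + a) ^ (n + 1) + (δ + a) ^ (n + 1)) / ((n : ℝ) + 1)) := by ring
      have hexp : Real.exp (-D * t / 2) = Real.exp (D * |t| / 2) := by
        rw [habs]; ring_nf
      calc f (n + 1) t
          ≤ 2 * δ * C * Real.exp (-D * t / 2) *
            ∫ s in (t - δ)..δ, Real.exp (-D * |s| / 2) * f n s := h1
        _ ≤ 2 * δ * C * Real.exp (-D * t / 2) *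
            (K * (((|t| + δ + a) ^ (n + 1) + (δ + a) ^ (n + 1)) / ((n : ℝ) + 1))) :=
            mul_le_mul_of_nonneg_left h2' (by positivity)
        _ = 2 * δ * C * Real.exp (D * |t| / 2) *
            (K * (((|t| + δ + a) ^ (n + 1) + (δ + a) ^ (n + 1)) / ((n : ℝ) + 1))) := by
            rw [hexp]
        _ ≤ _ := hfin
end

section
/- Let C > 0, δ > 0, T ≥ 0 and M ≥ 0, and suppose 8·e·δ²·C < 1. Then the series Σ_{n=0}^{∞} (M/n!)·(4Cδ)ⁿ·(T + 2nδ)ⁿ converges. -/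
/-!
Since `(T + 2nδ)ⁿ ≤ (2nδ)ⁿ e^{T/(2δ)}` and `nⁿ ≤ n! eⁿ`, the `n`-th term is at most
`M e^{T/(2δ)} (8eδ²C)ⁿ`, a geometric series of ratio `8eδ²C < 1`.
-/

open Real

theorem Real.one_add_div_pow_le_exp {n : ℕ} {a : ℝ} (ha : -(n : ℝ) ≤ a) :
    (1 + a / n) ^ n ≤ exp a := by
  simpa [neg_div, sub_neg_eq_add] using one_sub_div_pow_le_exp_neg (t := -a) (by linarith)

theorem Real.add_mul_pow_le_mul_pow_mul_exp (n : ℕ) {a b : ℝ} (ha : 0 ≤ a) (hb : 0 < b) :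
    (a + n * b) ^ n ≤ (n * b) ^ n * exp (a / b) := by
  rcases Nat.eq_zero_or_pos n with rfl | hn
  · simpa using one_le_exp (div_nonneg ha hb.le)
  calc (a + n * b) ^ n = (n * b) ^ n * (1 + a / b / n) ^ n := by
        rw [← mul_pow]; congr 1; field_simp; ring
    _ ≤ (n * b) ^ n * exp (a / b) := by
        gcongr
        exact one_add_div_pow_le_exp (by linarith [div_nonneg ha hb.le, n.cast_nonneg (α := ℝ)])

theorem short_range_term_le (n : ℕ) {C δ T M : ℝ} (hC : 0 ≤ C) (hδ : 0 < δ) (hT : 0 ≤ T)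
    (hM : 0 ≤ M) :
    M / n.factorial * (4 * C * δ) ^ n * (T + 2 * n * δ) ^ n ≤
      M * exp (T / (2 * δ)) * (8 * exp 1 * δ ^ 2 * C) ^ n := by
  calc M / n.factorial * (4 * C * δ) ^ n * (T + 2 * n * δ) ^ n
      ≤ M / n.factorial * (4 * C * δ) ^ n * ((n * (2 * δ)) ^ n * exp (T / (2 * δ))) := by
        rw [show T + 2 * n * δ = T + n * (2 * δ) by ring]
        gcongr
        exact add_mul_pow_le_mul_pow_mul_exp n hT (by positivity)
    _ = M * exp (T / (2 * δ)) * (4 * C * δ) ^ n * (2 * δ) ^ n * ((n : ℝ) ^ n / n.factorial) := by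
        rw [mul_pow (n : ℝ)]; ring
    _ ≤ M * exp (T / (2 * δ)) * (4 * C * δ) ^ n * (2 * δ) ^ n * exp 1 ^ n := by
        rw [← exp_nat_mul, mul_one]
        gcongr
        exact Real.pow_div_factorial_le_exp _ n.cast_nonneg n
    _ = M * exp (T / (2 * δ)) * (8 * exp 1 * δ ^ 2 * C) ^ n := by
        rw [show 8 * exp 1 * δ ^ 2 * C = 4 * C * δ * (2 * δ) * exp 1 by ring,
          mul_pow _ (exp 1), mul_pow (4 * C * δ)]
        ring

/-- Summability of the perturbative series in the short-time-range case under the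
smallness condition `8 e δ² C < 1`. -/
theorem short_range_series_summable (C δ T M : ℝ)
    (hC : 0 < C) (hδ : 0 < δ) (hT : 0 ≤ T) (hM : 0 ≤ M)
    (hsmall : 8 * Real.exp 1 * δ ^ 2 * C < 1) :
    Summable (fun n : ℕ =>
      (M / (n.factorial : ℝ)) * (4 * C * δ) ^ n * (T + 2 * (n : ℝ) * δ) ^ n) := by
  have hgeom : Summable fun n : ℕ => M * exp (T / (2 * δ)) * (8 * exp 1 * δ ^ 2 * C) ^ n :=
    (summable_geometric_of_lt_one (by positivity) hsmall).mul_left _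
  exact hgeom.of_nonneg_of_le (fun n => by positivity)
    (fun n => short_range_term_le n hC.le hδ hT hM)
end

section
/- Let f : ℝ × ℝ → ℝ be smooth with compact support and ∫_{ℝ²} f(t,x)² dt dx = 1. Then there exists no square-integrable function ψ : ℝ × ℝ → ℝ such that for every smooth compactly supported φ : ℝ × ℝ → ℝ one has ∫_{ℝ²} ψ(t,x)·( −∂_t φ(t,x) + (∫_{ℝ²} f φ)·∂_t f(t,x) ) dt dx = ∫_{ℝ²} f(t,x) φ(t,x) dt dx. -/
open MeasureTheory

/-- Counterexample (Example 4.19): for the symmetric hyperbolic system `S = ∂ₜ` on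
`(1+1)`-dimensional Minkowski space with the rank-one nonlocal potential
`B = -|f⟩⟨∂ₜ f|`, the equation `(S - B)ψ = f` admits no square-integrable weak
solution. -/
theorem no_weak_solution_counterexample (f : ℝ × ℝ → ℝ)
    (hf : ContDiff ℝ (⊤ : ℕ∞) f) (hfc : HasCompactSupport f)
    (hfn : ∫ p : ℝ × ℝ, (f p) ^ 2 = 1) :
    ¬ ∃ ψ : ℝ × ℝ → ℝ, MemLp ψ 2 volume ∧
      ∀ φ : ℝ × ℝ → ℝ, ContDiff ℝ (⊤ : ℕ∞) φ → HasCompactSupport φ →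
        (∫ p : ℝ × ℝ, ψ p * (-(deriv (fun s => φ (s, p.2)) p.1)
            + (∫ q : ℝ × ℝ, f q * φ q) * deriv (fun s => f (s, p.2)) p.1))
          = ∫ p : ℝ × ℝ, f p * φ p := by
  rintro ⟨ψ, -, hw⟩
  have key := hw f hf hfc
  have hff : (∫ q : ℝ × ℝ, f q * f q) = 1 := by
    simpa [sq] using hfn
  rw [hff] at key
  simp only [one_mul, neg_add_cancel, mul_zero, integral_zero] at key
  exact zero_ne_one key
end

section
/- Let δ > 0 and let f : ℝ × ℝ → ℝ be smooth with compact support contained in (0, δ/2) × ℝ and with ∫_{ℝ²} f(t,x)² dt dx = 1. Then there exists t₀ ∈ (0, δ/2) such that (∫_ℝ f(t₀,x)² dx)·(∫_ℝ (∂_t f)(t₀,x)² dx) ≥ 4/δ⁴. -/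
open MeasureTheory Set

/-- Quantitative lower bound of Example 4.19: for a normalized smooth profile `f`
supported in `(0, δ/2) × ℝ` there is a time `t₀ ∈ (0, δ/2)` at which
`(∫ f(t₀,x)² dx) (∫ (∂ₜf)(t₀,x)² dx) ≥ 4/δ⁴`. -/
theorem exists_large_kernel_bound (δ : ℝ) (hδ : 0 < δ) (f : ℝ × ℝ → ℝ)
    (hf : ContDiff ℝ (⊤ : ℕ∞) f) (hfc : HasCompactSupport f)
    (hsupp : tsupport f ⊆ Set.Ioo (0 : ℝ) (δ / 2) ×ˢ (Set.univ : Set ℝ))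
    (hfn : ∫ p : ℝ × ℝ, (f p) ^ 2 = 1) :
    ∃ t₀ ∈ Set.Ioo (0 : ℝ) (δ / 2),
      4 / δ ^ 4 ≤ (∫ x : ℝ, (f (t₀, x)) ^ 2) *
        (∫ x : ℝ, (deriv (fun s => f (s, x)) t₀) ^ 2) := by
  by_contra hcontra
  push_neg at hcontra
  set g : ℝ × ℝ → ℝ := fun p => deriv (fun s => f (s, p.2)) p.1 with hg_def
  have hcf : Continuous f := hf.continuous
  -- the time derivative
  have hd : ∀ p : ℝ × ℝ, HasDerivAt (fun s => f (s, p.2)) (fderiv ℝ f p ((1 : ℝ), (0 : ℝ))) p.1 := by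
    intro p
    have h2 : HasDerivAt (fun s : ℝ => (s, p.2)) ((1 : ℝ), (0 : ℝ)) p.1 :=
      (hasDerivAt_id _).prodMk (hasDerivAt_const _ _)
    exact ((hf.differentiable (by simp) p).hasFDerivAt.comp_hasDerivAt _ h2)
  have hgeq : ∀ p : ℝ × ℝ, g p = fderiv ℝ f p ((1 : ℝ), (0 : ℝ)) := fun p => (hd p).deriv
  have hd' : ∀ p : ℝ × ℝ, HasDerivAt (fun s => f (s, p.2)) (g p) p.1 := by
    intro p; rw [hgeq p]; exact hd p
  have hgcont : Continuous g := by
    have h1 : Continuous (fderiv ℝ f) := hf.continuous_fderiv (by simp)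
    have h2 : Continuous fun p : ℝ × ℝ => fderiv ℝ f p ((1 : ℝ), (0 : ℝ)) :=
      h1.clm_apply continuous_const
    have : g = fun p : ℝ × ℝ => fderiv ℝ f p ((1 : ℝ), (0 : ℝ)) := funext hgeq
    rw [this]; exact h2
  have hgc : HasCompactSupport g := by
    refine HasCompactSupport.intro hfc ?_
    intro p hp
    rw [hgeq p]
    have : fderiv ℝ f p = 0 := by
      by_contra h
      exact hp (support_fderiv_subset ℝ (Function.mem_support.mpr h))
    simp [this]
  -- vanishing outside the time strip
  have hf0 : ∀ t x : ℝ, t ∉ Set.Ioo (0 : ℝ) (δ / 2) → f (t, x) = 0 := by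
    intro t x ht
    by_contra h
    exact ht (hsupp (subset_tsupport f h)).1
  -- slices have compact support
  have slice : ∀ (h : ℝ × ℝ → ℝ), HasCompactSupport h → ∀ t : ℝ,
      HasCompactSupport fun x => h (t, x) := by
    intro h hc t
    refine HasCompactSupport.intro (hc.image continuous_snd) ?_
    intro x hx
    by_contra hne
    exact hx ⟨(t, x), subset_tsupport _ hne, rfl⟩
  -- global integrability facts
  have hfsq_cs : HasCompactSupport fun p : ℝ × ℝ => f p ^ 2 := by
    exact hfc.comp_left (g := fun y : ℝ => y ^ 2) (by norm_num)
  have hfsq_int : Integrable (fun p : ℝ × ℝ => f p ^ 2) volume :=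
    (hcf.pow 2).integrable_of_hasCompactSupport hfsq_cs
  have hΨcont : Continuous fun p : ℝ × ℝ => 2 * f p * g p :=
    (continuous_const.mul hcf).mul hgcont
  have hΨcs : HasCompactSupport fun p : ℝ × ℝ => 2 * f p * g p := by
    have h1 : HasCompactSupport (fun p : ℝ × ℝ => f p * g p) := HasCompactSupport.mul_right hfc (f' := g)
    have h2 := HasCompactSupport.mul_left h1 (f := fun _ : ℝ × ℝ => (2:ℝ))
    have h3 : ((fun _ : ℝ × ℝ => (2:ℝ)) * fun p : ℝ × ℝ => f p * g p) =
        fun p : ℝ × ℝ => 2 * f p * g p := by funext p; simp [Pi.mul_apply]; ring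
    rwa [h3] at h2
  have hΨint : Integrable (fun p : ℝ × ℝ => 2 * f p * g p) volume :=
    hΨcont.integrable_of_hasCompactSupport hΨcs
  set F : ℝ → ℝ := fun t => ∫ x : ℝ, f (t, x) ^ 2 with hF_def
  set G : ℝ → ℝ := fun t => ∫ x : ℝ, g (t, x) ^ 2 with hG_def
  set H : ℝ → ℝ := fun s => ∫ x : ℝ, 2 * f (s, x) * g (s, x) with hH_def
  have hcon : ∀ t ∈ Set.Ioo (0 : ℝ) (δ / 2), F t * G t < 4 / δ ^ 4 := hcontra
  have hFnn : ∀ t, 0 ≤ F t := fun t => integral_nonneg fun x => sq_nonneg _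
  have hGnn : ∀ t, 0 ≤ G t := fun t => integral_nonneg fun x => sq_nonneg _
  -- step A : ∫ F = 1
  have hfsq_int' : Integrable (fun p : ℝ × ℝ => f p ^ 2) (volume.prod volume) := by
    rwa [← Measure.volume_eq_prod]
  have hone : ∫ t : ℝ, F t = 1 := by
    calc ∫ t : ℝ, F t = ∫ p : ℝ × ℝ, f p ^ 2 ∂(volume.prod volume) :=
          (integral_prod _ hfsq_int').symm
      _ = 1 := by rw [← Measure.volume_eq_prod]; exact hfn
  -- step B : F vanishes outside the strip
  have hFzero : ∀ t, t ∉ Set.Ioo (0 : ℝ) (δ / 2) → F t = 0 := by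
    intro t ht
    have : (fun x : ℝ => f (t, x) ^ 2) = fun _ => (0 : ℝ) := by
      funext x; rw [hf0 t x ht]; ring
    show (∫ x : ℝ, f (t, x) ^ 2) = 0
    rw [this]; exact integral_zero _ _
  -- step E : pointwise bound on H
  have hHbound : ∀ s ∈ Set.Ioo (0 : ℝ) (δ / 2), H s ≤ 4 / δ ^ 2 := by
    intro s hs
    have hu : Continuous fun x => f (s, x) := hcf.comp (Continuous.prodMk continuous_const continuous_id)
    have hv : Continuous fun x => g (s, x) := hgcont.comp (Continuous.prodMk continuous_const continuous_id)
    have hucs := slice f hfc s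
    have hvcs := slice g hgc s
    have hmem_u : MemLp (fun x => f (s, x)) (ENNReal.ofReal 2) volume :=
      hu.memLp_of_hasCompactSupport hucs
    have hmem_v : MemLp (fun x => g (s, x)) (ENNReal.ofReal 2) volume :=
      hv.memLp_of_hasCompactSupport hvcs
    have hconj : Real.HolderConjugate 2 2 := ⟨by norm_num, by norm_num, by norm_num⟩
    have hCS := integral_mul_norm_le_Lp_mul_Lq (μ := volume) hconj hmem_u hmem_v
    -- rewrite the Hölder inequality in terms of F and G
    have hn1 : ∀ x : ℝ, ‖f (s, x)‖ ^ (2 : ℝ) = f (s, x) ^ 2 := by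
      intro x
      rw [show ((2 : ℝ)) = ((2 : ℕ) : ℝ) by norm_num, Real.rpow_natCast]
      rw [Real.norm_eq_abs, sq_abs]
    have hn2 : ∀ x : ℝ, ‖g (s, x)‖ ^ (2 : ℝ) = g (s, x) ^ 2 := by
      intro x
      rw [show ((2 : ℝ)) = ((2 : ℕ) : ℝ) by norm_num, Real.rpow_natCast]
      rw [Real.norm_eq_abs, sq_abs]
    have hCS' : ∫ x : ℝ, ‖f (s, x)‖ * ‖g (s, x)‖ ≤ Real.sqrt (F s) * Real.sqrt (G s) := by
      calc ∫ x : ℝ, ‖f (s, x)‖ * ‖g (s, x)‖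
          ≤ (∫ x : ℝ, ‖f (s, x)‖ ^ (2 : ℝ)) ^ ((1 : ℝ) / 2) *
            (∫ x : ℝ, ‖g (s, x)‖ ^ (2 : ℝ)) ^ ((1 : ℝ) / 2) := hCS
        _ = Real.sqrt (F s) * Real.sqrt (G s) := by
            simp only [hn1, hn2]
            rw [← Real.sqrt_eq_rpow, ← Real.sqrt_eq_rpow]
    have huv_int : Integrable (fun x => f (s, x) * g (s, x)) volume :=
      (hu.mul hv).integrable_of_hasCompactSupport (HasCompactSupport.mul_right hucs (f' := fun x => g (s, x)))
    have habs_int : Integrable (fun x => ‖f (s, x)‖ * ‖g (s, x)‖) volume := by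
      simpa [abs_mul] using huv_int.abs
    have h1 : H s ≤ 2 * (Real.sqrt (F s) * Real.sqrt (G s)) := by
      show (∫ x : ℝ, 2 * f (s, x) * g (s, x)) ≤ 2 * (Real.sqrt (F s) * Real.sqrt (G s))
      have heq : (∫ x : ℝ, 2 * f (s, x) * g (s, x)) = 2 * ∫ x : ℝ, f (s, x) * g (s, x) := by
        simp_rw [mul_assoc]
        exact integral_const_mul 2 _
      rw [heq]
      have h2 : (∫ x : ℝ, f (s, x) * g (s, x)) ≤ ∫ x : ℝ, ‖f (s, x)‖ * ‖g (s, x)‖ := by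
        refine integral_mono huv_int habs_int fun x => ?_
        calc f (s, x) * g (s, x) ≤ |f (s, x) * g (s, x)| := le_abs_self _
          _ = ‖f (s, x)‖ * ‖g (s, x)‖ := by rw [abs_mul]; rfl
      nlinarith [hCS'.trans_eq rfl]
    have hsqrt : Real.sqrt (F s) * Real.sqrt (G s) ≤ 2 / δ ^ 2 := by
      rw [← Real.sqrt_mul (hFnn s)]
      have h4 : F s * G s ≤ 4 / δ ^ 4 := (hcon s hs).le
      calc Real.sqrt (F s * G s) ≤ Real.sqrt (4 / δ ^ 4) := Real.sqrt_le_sqrt h4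
        _ = 2 / δ ^ 2 := by
            rw [show (4 / δ ^ 4) = (2 / δ ^ 2) ^ 2 by field_simp; ring]
            exact Real.sqrt_sq (by positivity)
    calc H s ≤ 2 * (Real.sqrt (F s) * Real.sqrt (G s)) := h1
      _ ≤ 2 * (2 / δ ^ 2) := by linarith
      _ = 4 / δ ^ 2 := by ring
  -- step D : F t = ∫ s in (0, t], H s for t in the strip
  have hFeq : ∀ t ∈ Set.Ioo (0 : ℝ) (δ / 2), F t = ∫ s in Set.Ioc (0 : ℝ) t, H s := by
    intro t ht
    have hfund : ∀ x : ℝ, f (t, x) ^ 2 = ∫ s in Set.Ioc (0 : ℝ) t, 2 * f (s, x) * g (s, x) := by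
      intro x
      have hderiv : ∀ s ∈ Set.uIcc (0 : ℝ) t,
          HasDerivAt (fun s => f (s, x) ^ 2) (2 * f (s, x) * g (s, x)) s := by
        intro s _
        have h1 : HasDerivAt (fun s => f (s, x)) (g (s, x)) s := hd' (s, x)
        have h2 := h1.fun_pow 2
        refine h2.congr_deriv ?_
        push_cast
        ring
      have hint : IntervalIntegrable (fun s => 2 * f (s, x) * g (s, x)) volume 0 t := by
        apply Continuous.intervalIntegrable
        exact hΨcont.comp (Continuous.prodMk continuous_id continuous_const)
      have := intervalIntegral.integral_eq_sub_of_hasDerivAt hderiv hint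
      rw [intervalIntegral.integral_of_le ht.1.le] at this
      rw [this, hf0 0 x (by simp [hδ]), ]
      ring
    have hswap_int : Integrable (Function.uncurry fun (x s : ℝ) => 2 * f (s, x) * g (s, x))
        (volume.prod (volume.restrict (Set.Ioc (0 : ℝ) t))) := by
      have h1 : Integrable (fun p : ℝ × ℝ => 2 * f p * g p) (volume.prod volume) := by
        rwa [← Measure.volume_eq_prod]
      have h2 := h1.swap
      have h3 : (volume : Measure ℝ).prod (volume.restrict (Set.Ioc (0 : ℝ) t)) =
          ((volume : Measure ℝ).prod volume).restrict (Set.univ ×ˢ Set.Ioc (0 : ℝ) t) := by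
        rw [← Measure.prod_restrict, Measure.restrict_univ]
      rw [h3]
      exact h2.restrict
    calc F t = ∫ x : ℝ, ∫ s in Set.Ioc (0 : ℝ) t, 2 * f (s, x) * g (s, x) := by
          exact integral_congr_ae (Filter.Eventually.of_forall hfund)
      _ = ∫ s in Set.Ioc (0 : ℝ) t, ∫ x : ℝ, 2 * f (s, x) * g (s, x) :=
          integral_integral_swap hswap_int
      _ = ∫ s in Set.Ioc (0 : ℝ) t, H s := rfl
  -- integrability of H and F
  have hΨint' : Integrable (fun p : ℝ × ℝ => 2 * f p * g p) (volume.prod volume) := by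
    rwa [← Measure.volume_eq_prod]
  have hHint : Integrable H volume := hΨint'.integral_prod_left
  have hFint : Integrable F volume := hfsq_int'.integral_prod_left
  -- step F : F t ≤ 4/δ² * t on the strip
  have hFle : ∀ t ∈ Set.Ioo (0 : ℝ) (δ / 2), F t ≤ 4 / δ ^ 2 * t := by
    intro t ht
    rw [hFeq t ht]
    have hsub : Set.Ioc (0 : ℝ) t ⊆ Set.Ioo (0 : ℝ) (δ / 2) := fun s hs =>
      ⟨hs.1, lt_of_le_of_lt hs.2 ht.2⟩
    calc ∫ s in Set.Ioc (0 : ℝ) t, H s ≤ ∫ _ in Set.Ioc (0 : ℝ) t, (4 / δ ^ 2 : ℝ) := by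
          refine setIntegral_mono_on (hHint.integrableOn) ?_ measurableSet_Ioc ?_
          · exact integrableOn_const (measure_Ioc_lt_top).ne
          · exact fun s hs => hHbound s (hsub hs)
      _ = 4 / δ ^ 2 * t := by
          rw [setIntegral_const]
          rw [Real.volume_real_Ioc_of_le ht.1.le]
          simp [mul_comm]
  -- final contradiction : 1 ≤ 1/2
  have hstep1 : (1 : ℝ) = ∫ t in Set.Ioo (0 : ℝ) (δ / 2), F t := by
    rw [← hone]
    exact (setIntegral_eq_integral_of_forall_compl_eq_zero fun t ht => hFzero t ht).symm
  have hstep2 : ∫ t in Set.Ioo (0 : ℝ) (δ / 2), F t ≤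
      ∫ t in Set.Ioo (0 : ℝ) (δ / 2), 4 / δ ^ 2 * t := by
    refine setIntegral_mono_on hFint.integrableOn ?_ measurableSet_Ioo hFle
    exact ((continuous_const.mul continuous_id).integrableOn_Icc).mono_set Set.Ioo_subset_Icc_self
  have hstep3 : ∫ t in Set.Ioo (0 : ℝ) (δ / 2), (4 / δ ^ 2 * t) = 1 / 2 := by
    rw [← integral_Ioc_eq_integral_Ioo, ← intervalIntegral.integral_of_le (by positivity : (0:ℝ) ≤ δ / 2)]
    rw [intervalIntegral.integral_const_mul, integral_id]
    field_simp
    ring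
  rw [hstep3] at hstep2
  linarith [hstep1 ▸ hstep2]
end
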